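/- arXiv:2006.09711 — 2 statements merged into one kernel-verified Lean document; each statement's English description precedes it below -/
import Mathlib

section
/- Suppose P is isomorphism-invariant, holds for the zero module, and is closed under binary direct sums. If (X_a)_{a ∈ A} is any family of R-modules each of which is locally P, then the direct sum ⊕_{a ∈ A} X_a is locally P. -/
universe u v

open DirectSum

/-- A disjoint sup of submodules is isomorphic to the product. -/
noncomputable def aux_supEquiv {R : Type u} [Ring R] {M : Type v} [AddCommGroup M] [Module R M]
    (p q : Submodule R M) (h : Disjoint p q) :
    (↥p × ↥q) ≃ₗ[R] ↥(p ⊔ q) := by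
  refine LinearEquiv.ofBijective
    (LinearMap.coprod (Submodule.inclusion le_sup_left) (Submodule.inclusion le_sup_right))
    ⟨?_, ?_⟩
  · rw [← LinearMap.ker_eq_bot, eq_bot_iff]
    rintro ⟨a, b⟩ hab
    simp only [LinearMap.mem_ker, LinearMap.coprod_apply] at hab
    have hab' : (a : M) + (b : M) = 0 := congrArg Subtype.val hab
    have haq : (a : M) ∈ q := by
      have : (a : M) = -(b : M) := eq_neg_of_add_eq_zero_left hab'
      rw [this]; exact q.neg_mem b.2
    have ha0 : (a : M) = 0 := h.le_bot ⟨a.2, haq⟩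
    have hb0 : (b : M) = 0 := by rw [ha0, zero_add] at hab'; exact hab'
    simp only [Submodule.mem_bot, Prod.mk_eq_zero]
    exact ⟨Subtype.ext ha0, Subtype.ext hb0⟩
  · rintro ⟨m, hm⟩
    rcases Submodule.mem_sup.mp hm with ⟨a, ha, b, hb, rfl⟩
    exact ⟨(⟨a, ha⟩, ⟨b, hb⟩), rfl⟩

theorem aux_sup_le_ker {R : Type u} [Ring R] {A : Type v} [DecidableEq A]
    (X : A → Type v) [∀ a, AddCommGroup (X a)] [∀ a, Module R (X a)]
    (V : ∀ a, Submodule R (X a)) (s : Finset A) {b : A} (hb : b ∉ s) :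
    (⨆ a ∈ s, (V a).map (DirectSum.lof R A X a)) ≤
      LinearMap.ker (DirectSum.component R A X b) := by
  refine iSup_le fun a => iSup_le fun ha => ?_
  rintro _ ⟨v, hv, rfl⟩
  have hab : a ≠ b := fun h => hb (h ▸ ha)
  simp [LinearMap.mem_ker, DirectSum.component.of, hab]

theorem aux_P_sup {R : Type u} [Ring R]
    (P : ∀ (M : Type v) [AddCommGroup M] [Module R M], Prop)
    (hiso : ∀ (M N : Type v) [AddCommGroup M] [Module R M] [AddCommGroup N] [Module R N],
      (M ≃ₗ[R] N) → P M → P N)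
    (hzero : ∀ (M : Type v) [AddCommGroup M] [Module R M], Subsingleton M → P M)
    (hprod : ∀ (M N : Type v) [AddCommGroup M] [Module R M] [AddCommGroup N] [Module R N],
      P M → P N → P (M × N))
    {A : Type v} [DecidableEq A] (X : A → Type v) [∀ a, AddCommGroup (X a)]
    [∀ a, Module R (X a)] (V : ∀ a, Submodule R (X a)) (hP : ∀ a, P ↥(V a))
    (s : Finset A) :
    P ↥(⨆ a ∈ s, (V a).map (DirectSum.lof R A X a)) := by
  classical
  induction s using Finset.induction_on with
  | empty =>
      have he : (⨆ a ∈ (∅ : Finset A), (V a).map (DirectSum.lof R A X a)) = ⊥ := by simp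
      rw [he]
      exact hzero _ inferInstance
  | @insert b t hb ih =>
      rw [Finset.iSup_insert]
      have hdisj : Disjoint ((V b).map (DirectSum.lof R A X b))
          (⨆ a ∈ t, (V a).map (DirectSum.lof R A X a)) := by
        rw [disjoint_iff_inf_le]
        rintro y ⟨⟨v, hv, rfl⟩, h2⟩
        have := aux_sup_le_ker X V t hb h2
        simp only [LinearMap.mem_ker, DirectSum.component.lof_self] at this
        rw [this]; simp
      have hmap : P ↥((V b).map (DirectSum.lof R A X b)) :=
        hiso _ _ (Submodule.equivMapOfInjective (DirectSum.lof R A X b)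
          (fun x y hxy => DirectSum.of_injective b hxy) (V b)) (hP b)
      exact hiso _ _ (aux_supEquiv _ _ hdisj) (hprod _ _ hmap ih)

/-- If an isomorphism-invariant property `P` of `R`-modules holds for the zero
module and is closed under binary direct sums, then the direct sum of any family
of locally-`P` modules is locally `P`. -/
theorem directSum_locallyP
    {R : Type u} [Ring R]
    (P : ∀ (M : Type v) [AddCommGroup M] [Module R M], Prop)
    (hiso : ∀ (M N : Type v) [AddCommGroup M] [Module R M] [AddCommGroup N] [Module R N],
      (M ≃ₗ[R] N) → P M → P N)
    (hzero : ∀ (M : Type v) [AddCommGroup M] [Module R M], Subsingleton M → P M)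
    (hprod : ∀ (M N : Type v) [AddCommGroup M] [Module R M] [AddCommGroup N] [Module R N],
      P M → P N → P (M × N))
    (A : Type v) (X : A → Type v) [∀ a, AddCommGroup (X a)] [∀ a, Module R (X a)]
    (hX : ∀ a : A, ∀ x : X a, ∃ W : Submodule R (X a), x ∈ W ∧ P ↥W) :
    ∀ x : DirectSum A X, ∃ W : Submodule R (DirectSum A X), x ∈ W ∧ P ↥W := by
  classical
  intro x
  choose V hV hP using fun a => hX a (x a)
  refine ⟨⨆ a ∈ x.support, (V a).map (DirectSum.lof R A X a), ?_, ?_⟩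
  · have hmem : (∑ a ∈ x.support, DirectSum.of X a (x a)) ∈
        ⨆ a ∈ x.support, (V a).map (DirectSum.lof R A X a) :=
      Submodule.sum_mem _ fun a ha => Submodule.mem_iSup_of_mem a
        (Submodule.mem_iSup_of_mem ha ⟨x a, hV a, rfl⟩)
    rwa [DirectSum.sum_support_of] at hmem
  · exact aux_P_sup P hiso hzero hprod X V hP x.support
end

section
/- Let s > 0 be a real number and set t = (s+1)/(2s) and u = (s+1)/2. For a nonzero real parameter p and integers a, b, define h^{(p)}_{a,b} = ((a² − 1)/4)·p − (ab − 1)/2 + ((b² − 1)/4)·p⁻¹. Let n be an odd positive integer. Then the function r ↦ (r² − 1)/(4u) + h^{(t)}_{n,r} on positive integers r attains its minimum value (n² − 1)/(8s); the minimum is attained at r = (n+1)/2, and also at r = (n−1)/2 when n > 1. -/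
/-- The Virasoro lowest conformal weight `h^{(p)}_{a,b}`. -/
noncomputable def virasoroWeight (p : ℝ) (a b : ℤ) : ℝ :=
  ((a : ℝ) ^ 2 - 1) / 4 * p - ((a : ℝ) * (b : ℝ) - 1) / 2 + ((b : ℝ) ^ 2 - 1) / 4 * p⁻¹

lemma conformal_weight_closed_form (s : ℝ) (hs : 0 < s) (n r : ℤ) :
    ((r : ℝ) ^ 2 - 1) / (4 * ((s + 1) / 2)) + virasoroWeight ((s + 1) / (2 * s)) n r
      = ((2 * (r:ℝ) - n) ^ 2 - 1) / 8 + ((n : ℝ) ^ 2 - 1) / (8 * s) := by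
  have hs0 : s ≠ 0 := ne_of_gt hs
  have hs1 : s + 1 ≠ 0 := by positivity
  simp only [virasoroWeight]
  rw [inv_div]
  field_simp
  ring

/-- For `s > 0`, `t = (s+1)/(2s)`, `u = (s+1)/2`, and an odd positive integer
`n`, the function `r ↦ (r²−1)/(4u) + h^{(t)}_{n,r}` on positive integers attains
its minimum value `(n²−1)/(8s)`; the minimum is attained at `r = (n+1)/2`, and
also at `r = (n−1)/2` when `n > 1`. -/
theorem min_conformal_weight_affineOsp
    (s : ℝ) (hs : 0 < s) (n : ℤ) (hn : 0 < n) (hodd : Odd n)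
    (r₁ r₂ : ℤ) (hr₁ : n + 1 = 2 * r₁) (hr₂ : n - 1 = 2 * r₂) :
    (∀ r : ℤ, 0 < r →
      ((n : ℝ) ^ 2 - 1) / (8 * s)
        ≤ ((r : ℝ) ^ 2 - 1) / (4 * ((s + 1) / 2))
          + virasoroWeight ((s + 1) / (2 * s)) n r) ∧
    ((r₁ : ℝ) ^ 2 - 1) / (4 * ((s + 1) / 2)) + virasoroWeight ((s + 1) / (2 * s)) n r₁
      = ((n : ℝ) ^ 2 - 1) / (8 * s) ∧
    (1 < n →
      ((r₂ : ℝ) ^ 2 - 1) / (4 * ((s + 1) / 2)) + virasoroWeight ((s + 1) / (2 * s)) n r₂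
        = ((n : ℝ) ^ 2 - 1) / (8 * s)) := by
  obtain ⟨m, hm⟩ := hodd
  refine ⟨?_, ?_, ?_⟩
  · intro r hr
    rw [conformal_weight_closed_form s hs]
    have hodd2 : 2 * r - n ≠ 0 := by omega
    have key : (1:ℤ) ≤ (2 * r - n) ^ 2 := by
      have := Int.one_le_abs hodd2
      nlinarith [sq_abs (2 * r - n)]
    have keyR : (1:ℝ) ≤ (2 * (r:ℝ) - n) ^ 2 := by exact_mod_cast key
    linarith
  · rw [conformal_weight_closed_form s hs]
    have h1 : ((n:ℝ) + 1) = 2 * (r₁:ℝ) := by exact_mod_cast hr₁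
    have : (2 * (r₁:ℝ) - n) = 1 := by linarith
    rw [this]; norm_num
  · intro _
    rw [conformal_weight_closed_form s hs]
    have h2 : ((n:ℝ) - 1) = 2 * (r₂:ℝ) := by exact_mod_cast hr₂
    have : (2 * (r₂:ℝ) - n) = -1 := by linarith
    rw [this]; norm_num
end
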